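/- arXiv:1609.02763 — 2 statements merged into one kernel-verified Lean document; each statement's English description precedes it below -/
import Mathlib

section
/- Let A be an m×n real matrix, let k be a positive integer, and let δ_{2k} be the restricted isometry constant of A of order 2k, i.e. the smallest δ ≥ 0 such that (1−δ)‖x‖₂² ≤ ‖Ax‖₂² ≤ (1+δ)‖x‖₂² for every vector x ∈ ℝⁿ with at most 2k nonzero entries. Suppose δ_{2k} < √2 − 1. Then there exist constants C₁, C₂ > 0 depending only on δ_{2k} such that for every f ∈ ℝⁿ, every ε ≥ 0, and every e ∈ ℝᵐ with ‖e‖₂ ≤ ε, if b = A f + e, then any minimizer f* of ‖x‖₁ over the set {x ∈ ℝⁿ : ‖A x − b‖₂ ≤ ε} satisfies ‖f − f*‖₂ ≤ C₁ ε + C₂ ‖f − f^k‖₁ / √k, where f^k is a best k-term approximation of f, i.e. the vector obtained from f by keeping its k largest-magnitude entries and setting the remaining entries to zero. -/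
open Finset Matrix

/-- The Euclidean (ℓ²) norm of a vector in ℝⁿ. -/
noncomputable def l2norm {n : ℕ} (x : Fin n → ℝ) : ℝ := Real.sqrt (∑ i, (x i) ^ 2)

/-- The ℓ¹ norm of a vector in ℝⁿ. -/
noncomputable def l1norm {n : ℕ} (x : Fin n → ℝ) : ℝ := ∑ i, |x i|

/-- A vector is `k`-sparse if it has at most `k` nonzero entries. -/
def IsSparse {n : ℕ} (k : ℕ) (x : Fin n → ℝ) : Prop :=
  ∃ s : Finset (Fin n), s.card ≤ k ∧ ∀ i ∉ s, x i = 0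

/-- `fk` is a best `k`-term approximation of `f`: it is obtained from `f` by keeping
`k` largest-magnitude entries and setting the remaining entries to zero. -/
def IsBestKTermApprox {n : ℕ} (k : ℕ) (f fk : Fin n → ℝ) : Prop :=
  ∃ S : Finset (Fin n), S.card = k ∧ (∀ i ∈ S, ∀ j ∉ S, |f j| ≤ |f i|) ∧
    fk = fun i => if i ∈ S then f i else 0

/-! Candès' argument. Put `h = f* - f` and let `T₀` be the support of `f^k`. Minimality of `‖f*‖₁`
gives the cone condition `‖h_{T₀ᶜ}‖₁ ≤ ‖h_{T₀}‖₁ + 2 ‖f - f^k‖₁`, and feasibility of both `f` and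
`f*` gives `‖A h‖₂ ≤ 2ε`. Cut `T₀ᶜ` into blocks `T₁, T₂, …` holding the `k` largest entries of `h`,
the next `k`, and so on, so that `∑_{j ≥ 2} ‖h_{T_j}‖₂ ≤ ‖h_{T₀ᶜ}‖₁ / √k`. The RIP of order `2k`
makes images of disjointly supported `k`-sparse vectors nearly orthogonal,
`|⟨A x, A y⟩| ≤ δ ‖x‖₂ ‖y‖₂`; expanding `‖A h_{T₀ ∪ T₁}‖₂²` against `A h` then gives
`(1 - (1 + √2) δ) ‖h_{T₀ ∪ T₁}‖₂ ≤ √(1 + δ) ‖A h‖₂ + 2 √2 δ ‖f - f^k‖₁ / √k`, which is where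
`δ < √2 - 1` enters. Finally `‖h‖₂ ≤ 2 ‖h_{T₀ ∪ T₁}‖₂ + 2 ‖f - f^k‖₁ / √k`. -/

section Norms

variable {n : ℕ}

open WithLp in
lemma l2norm_eq_norm_toLp (x : Fin n → ℝ) : l2norm x = ‖toLp 2 x‖ := by
  rw [EuclideanSpace.norm_eq]
  simp [l2norm]

lemma l2norm_nonneg (x : Fin n → ℝ) : 0 ≤ l2norm x := Real.sqrt_nonneg _

lemma sq_l2norm (x : Fin n → ℝ) : l2norm x ^ 2 = ∑ i, x i ^ 2 :=
  Real.sq_sqrt (by positivity)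

lemma sq_l2norm_eq_dotProduct (x : Fin n → ℝ) : l2norm x ^ 2 = x ⬝ᵥ x := by
  rw [sq_l2norm]; simp only [dotProduct, sq]

lemma l2norm_eq_zero {x : Fin n → ℝ} : l2norm x = 0 ↔ x = 0 := by
  simp [l2norm_eq_norm_toLp]

lemma l2norm_neg (x : Fin n → ℝ) : l2norm (-x) = l2norm x := by
  simp [l2norm]

lemma l2norm_zero : l2norm (0 : Fin n → ℝ) = 0 := l2norm_eq_zero.2 rfl

lemma l2norm_smul (a : ℝ) (x : Fin n → ℝ) : l2norm (a • x) = |a| * l2norm x := by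
  simp only [l2norm_eq_norm_toLp, WithLp.toLp_smul, norm_smul, Real.norm_eq_abs]

lemma l2norm_add_le (x y : Fin n → ℝ) : l2norm (x + y) ≤ l2norm x + l2norm y := by
  simpa only [l2norm_eq_norm_toLp, WithLp.toLp_add] using norm_add_le _ _

lemma l2norm_sum_le {ι : Type*} (s : Finset ι) (x : ι → Fin n → ℝ) :
    l2norm (∑ j ∈ s, x j) ≤ ∑ j ∈ s, l2norm (x j) := by
  simpa only [l2norm_eq_norm_toLp, WithLp.toLp_sum] using norm_sum_le _ _

lemma abs_dotProduct_le (x y : Fin n → ℝ) : |x ⬝ᵥ y| ≤ l2norm x * l2norm y := by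
  simpa [l2norm_eq_norm_toLp, EuclideanSpace.inner_toLp_toLp, dotProduct_comm]
    using abs_real_inner_le_norm (WithLp.toLp 2 x) (WithLp.toLp 2 y)

lemma l2norm_add_sq (x y : Fin n → ℝ) :
    l2norm (x + y) ^ 2 = l2norm x ^ 2 + 2 * (x ⬝ᵥ y) + l2norm y ^ 2 := by
  simpa [l2norm_eq_norm_toLp, EuclideanSpace.inner_toLp_toLp, dotProduct_comm]
    using norm_add_sq_real (WithLp.toLp 2 x) (WithLp.toLp 2 y)

lemma l2norm_smul_add_smul_sq (a b : ℝ) (x y : Fin n → ℝ) :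
    l2norm (a • x + b • y) ^ 2 =
      a ^ 2 * l2norm x ^ 2 + 2 * a * b * (x ⬝ᵥ y) + b ^ 2 * l2norm y ^ 2 := by
  rw [l2norm_add_sq, l2norm_smul, l2norm_smul, smul_dotProduct, dotProduct_smul, mul_pow, mul_pow,
    sq_abs, sq_abs, smul_eq_mul, smul_eq_mul]
  ring

lemma indicator_finset_union {S₁ S₂ : Finset (Fin n)} (h₁₂ : Disjoint S₁ S₂) (x : Fin n → ℝ) :
    Set.indicator ↑(S₁ ∪ S₂) x = Set.indicator ↑S₁ x + Set.indicator ↑S₂ x := by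
  rw [Finset.coe_union, Set.indicator_union_of_disjoint (by simpa using h₁₂), Pi.add_def]

lemma indicator_finset_eq_add_sdiff {T R : Finset (Fin n)} (hTR : T ⊆ R) (x : Fin n → ℝ) :
    Set.indicator ↑R x = Set.indicator ↑T x + Set.indicator ↑(R \ T) x := by
  rw [← indicator_finset_union Finset.disjoint_sdiff, Finset.union_sdiff_of_subset hTR]

lemma sq_l2norm_indicator (S : Finset (Fin n)) (x : Fin n → ℝ) :
    l2norm (Set.indicator ↑S x) ^ 2 = ∑ i ∈ S, x i ^ 2 := by
  rw [sq_l2norm, ← Finset.sum_indicator_subset _ (Finset.subset_univ S)]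
  exact Finset.sum_congr rfl fun i _ => by by_cases hi : i ∈ S <;> simp [hi]

lemma l1norm_indicator (S : Finset (Fin n)) (x : Fin n → ℝ) :
    l1norm (Set.indicator ↑S x) = ∑ i ∈ S, |x i| := by
  rw [l1norm, ← Finset.sum_indicator_subset _ (Finset.subset_univ S)]
  exact Finset.sum_congr rfl fun i _ => by by_cases hi : i ∈ S <;> simp [hi]

lemma l2norm_indicator_mono {S T : Finset (Fin n)} (hST : S ⊆ T) (x : Fin n → ℝ) :
    l2norm (Set.indicator ↑S x) ≤ l2norm (Set.indicator ↑T x) := by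
  refine le_of_pow_le_pow_left₀ two_ne_zero (l2norm_nonneg _) ?_
  rw [sq_l2norm_indicator, sq_l2norm_indicator]
  exact Finset.sum_le_sum_of_subset_of_nonneg hST fun i _ _ => sq_nonneg _

lemma l2norm_indicator_add_le_sqrt_two_mul {S₁ S₂ : Finset (Fin n)} (h₁₂ : Disjoint S₁ S₂)
    (x : Fin n → ℝ) :
    l2norm (Set.indicator ↑S₁ x) + l2norm (Set.indicator ↑S₂ x) ≤
      √2 * l2norm (Set.indicator ↑(S₁ ∪ S₂) x) := by
  have hsq : l2norm (Set.indicator ↑(S₁ ∪ S₂) x) ^ 2 =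
      l2norm (Set.indicator ↑S₁ x) ^ 2 + l2norm (Set.indicator ↑S₂ x) ^ 2 := by
    simp only [sq_l2norm_indicator, Finset.sum_union h₁₂]
  refine le_of_pow_le_pow_left₀ two_ne_zero
    (mul_nonneg (Real.sqrt_nonneg _) (l2norm_nonneg _)) ?_
  rw [mul_pow, Real.sq_sqrt zero_le_two, hsq]
  nlinarith [sq_nonneg (l2norm (Set.indicator ↑S₁ x) - l2norm (Set.indicator ↑S₂ x))]

lemma sum_abs_le_sqrt_mul_l2norm_indicator {S : Finset (Fin n)} {k : ℕ} (hS : #S ≤ k)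
    (x : Fin n → ℝ) :
    ∑ i ∈ S, |x i| ≤ √k * l2norm (Set.indicator ↑S x) := by
  refine le_of_pow_le_pow_left₀ two_ne_zero (mul_nonneg (Real.sqrt_nonneg _) (l2norm_nonneg _)) ?_
  rw [mul_pow, Real.sq_sqrt (Nat.cast_nonneg k), sq_l2norm_indicator]
  calc (∑ i ∈ S, |x i|) ^ 2 ≤ #S * ∑ i ∈ S, |x i| ^ 2 := sq_sum_le_card_mul_sum_sq
    _ ≤ k * ∑ i ∈ S, x i ^ 2 := by
      simp only [sq_abs]; gcongr

lemma sum_compl_abs_le_of_l1norm_add_le (S : Finset (Fin n)) {x h : Fin n → ℝ}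
    (hmin : l1norm (x + h) ≤ l1norm x) :
    ∑ i ∈ Sᶜ, |h i| ≤ ∑ i ∈ S, |h i| + 2 * ∑ i ∈ Sᶜ, |x i| := by
  have hS : ∑ i ∈ S, (|x i| - |h i|) ≤ ∑ i ∈ S, |x i + h i| :=
    Finset.sum_le_sum fun i _ => abs_sub_abs_le_abs_add _ _
  have hSc : ∑ i ∈ Sᶜ, (|h i| - |x i|) ≤ ∑ i ∈ Sᶜ, |x i + h i| :=
    Finset.sum_le_sum fun i _ => by simpa only [add_comm] using abs_sub_abs_le_abs_add (h i) (x i)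
  rw [l1norm, l1norm, ← Finset.sum_add_sum_compl S, ← Finset.sum_add_sum_compl S] at hmin
  simp only [Pi.add_apply, Finset.sum_sub_distrib] at hmin hS hSc
  linarith

end Norms

lemma Finset.exists_subset_card_eq_forall_sdiff_le {α β : Type*} [DecidableEq α] [LinearOrder β]
    (g : α → β) (R : Finset α) {j : ℕ} (hj : j ≤ #R) :
    ∃ T ⊆ R, #T = j ∧ ∀ i ∈ T, ∀ i' ∈ R \ T, g i' ≤ g i := by
  induction j with
  | zero => exact ⟨∅, Finset.empty_subset R, rfl, by simp⟩
  | succ j ih =>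
    obtain ⟨T, hTR, hTcard, hT⟩ := ih (Nat.le_of_succ_le hj)
    have hne : (R \ T).Nonempty := by
      rw [← Finset.card_pos, Finset.card_sdiff_of_subset hTR]; omega
    obtain ⟨a, ha, hmax⟩ := Finset.exists_max_image (R \ T) g hne
    rw [Finset.mem_sdiff] at ha
    refine ⟨insert a T, Finset.insert_subset ha.1 hTR,
      by rw [Finset.card_insert_of_notMem ha.2, hTcard], ?_⟩
    intro i hi i' hi'
    rw [Finset.sdiff_insert] at hi'
    rcases Finset.mem_insert.1 hi with rfl | hiT
    · exact hmax i' (Finset.mem_of_mem_erase hi')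
    · exact hT i hiT i' (Finset.mem_of_mem_erase hi')

section Blocks

variable {n : ℕ}

lemma l2norm_indicator_le_of_forall_abs_le {k : ℕ} (hk : 0 < k) {T₁ T₂ : Finset (Fin n)}
    (hT₁ : #T₁ = k) (hT₂ : #T₂ ≤ k) {x : Fin n → ℝ} (hle : ∀ i ∈ T₁, ∀ i' ∈ T₂, |x i'| ≤ |x i|) :
    l2norm (Set.indicator ↑T₂ x) ≤ (∑ i ∈ T₁, |x i|) / √k := by
  set L := ∑ i ∈ T₁, |x i|
  have hkR : (0 : ℝ) < k := Nat.cast_pos.2 hk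
  have havg : ∀ i' ∈ T₂, |x i'| ≤ L / k := fun i' hi' => by
    rw [le_div_iff₀ hkR, ← hT₁, mul_comm, ← nsmul_eq_mul, ← Finset.sum_const]
    exact Finset.sum_le_sum fun i hi => hle i hi i' hi'
  refine le_of_pow_le_pow_left₀ two_ne_zero (by positivity) ?_
  rw [sq_l2norm_indicator, div_pow, Real.sq_sqrt hkR.le]
  calc ∑ i ∈ T₂, x i ^ 2 ≤ ∑ _i ∈ T₂, (L / k) ^ 2 :=
        Finset.sum_le_sum fun i hi => by
          rw [← sq_abs]; exact pow_le_pow_left₀ (abs_nonneg _) (havg i hi) 2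
    _ = #T₂ * (L / k) ^ 2 := by rw [Finset.sum_const, nsmul_eq_mul]
    _ ≤ k * (L / k) ^ 2 := by gcongr
    _ = L ^ 2 / k := by field_simp

/-- `R` is cut into `T₁`, the `k` largest entries of `x`, then the next `k`, and so on; each block
is dominated in `ℓ²` by the `ℓ¹` mass of its predecessor over `√k`. -/
lemma exists_block_decomposition {k : ℕ} (hk : 0 < k) (x : Fin n → ℝ) (R : Finset (Fin n)) :
    ∃ T₁ ⊆ R, #T₁ ≤ k ∧ ∃ (N : ℕ) (B : Fin N → Finset (Fin n)),
      (∀ j, B j ⊆ R \ T₁ ∧ #(B j) ≤ k) ∧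
      Set.indicator ↑R x = Set.indicator ↑T₁ x + ∑ j, Set.indicator ↑(B j) x ∧
      ∑ j, l2norm (Set.indicator ↑(B j) x) ≤ (∑ i ∈ R, |x i|) / √k := by
  induction R using Finset.strongInduction with
  | _ R ih =>
    by_cases hR : #R ≤ k
    · exact ⟨R, subset_rfl, hR, 0, Fin.elim0, fun j => j.elim0, by simp,
        by rw [Finset.univ_eq_empty, Finset.sum_empty]; positivity⟩
    obtain ⟨T₁, hT₁R, hT₁, hT₁top⟩ :=
      Finset.exists_subset_card_eq_forall_sdiff_le (|x ·|) R (le_of_not_ge hR)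
    have hT₁ne : T₁.Nonempty := Finset.card_pos.1 (hT₁ ▸ hk)
    obtain ⟨T₂, hT₂R, hT₂, N, B, hB, hsplit, hsum⟩ :=
      ih (R \ T₁) (Finset.sdiff_ssubset hT₁R hT₁ne)
    refine ⟨T₁, hT₁R, hT₁.le, N + 1, Fin.cons T₂ B, fun j => ?_, ?_, ?_⟩
    · refine Fin.cases ⟨hT₂R, hT₂⟩ (fun j => ?_) j
      simpa using ⟨(hB j).1.trans Finset.sdiff_subset, (hB j).2⟩
    · rw [Fin.sum_univ_succ, indicator_finset_eq_add_sdiff hT₁R, hsplit]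
      simp only [Fin.cons_zero, Fin.cons_succ]
    · have hhead := l2norm_indicator_le_of_forall_abs_le hk hT₁ hT₂ (x := x)
        fun i hi i' hi' => hT₁top i hi i' (hT₂R hi')
      simp only [Fin.sum_univ_succ, Fin.cons_zero, Fin.cons_succ]
      rw [← Finset.sum_sdiff hT₁R, add_div]
      linarith

end Blocks

section RestrictedIsometry

variable {m n : ℕ}

/-- `δ` bounds the restricted isometry constant `δ_s` of `A` from above. -/
def RestrictedIsometry (A : Matrix (Fin m) (Fin n) ℝ) (s : ℕ) (δ : ℝ) : Prop :=
  ∀ x : Fin n → ℝ, IsSparse s x →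
    (1 - δ) * l2norm x ^ 2 ≤ l2norm (A *ᵥ x) ^ 2 ∧ l2norm (A *ᵥ x) ^ 2 ≤ (1 + δ) * l2norm x ^ 2

lemma dotProduct_eq_zero_of_disjoint {S T : Finset (Fin n)} (hST : Disjoint S T)
    {x y : Fin n → ℝ} (hx : ∀ i ∉ S, x i = 0) (hy : ∀ i ∉ T, y i = 0) : x ⬝ᵥ y = 0 :=
  Finset.sum_eq_zero fun i _ => by
    by_cases hi : i ∈ S
    · rw [hy i (Finset.disjoint_left.1 hST hi), mul_zero]
    · rw [hx i hi, zero_mul]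

lemma abs_dotProduct_mulVec_le_of_disjoint {A : Matrix (Fin m) (Fin n) ℝ} {s t : ℕ} {δ : ℝ}
    (hA : RestrictedIsometry A (s + t) δ) {S T : Finset (Fin n)} (hST : Disjoint S T)
    (hS : #S ≤ s) (hT : #T ≤ t) {x y : Fin n → ℝ} (hx : ∀ i ∉ S, x i = 0)
    (hy : ∀ i ∉ T, y i = 0) :
    |(A *ᵥ x) ⬝ᵥ (A *ᵥ y)| ≤ δ * (l2norm x * l2norm y) := by
  rcases (mul_nonneg (l2norm_nonneg x) (l2norm_nonneg y)).eq_or_lt with hXY | hXY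
  · rcases mul_eq_zero.1 hXY.symm with hX | hY
    · simp [l2norm_eq_zero.1 hX, l2norm_zero]
    · simp [l2norm_eq_zero.1 hY, l2norm_zero]
  set X := l2norm x
  set Y := l2norm y
  set d := (A *ᵥ x) ⬝ᵥ (A *ᵥ y)
  have hxy : x ⬝ᵥ y = 0 := dotProduct_eq_zero_of_disjoint hST hx hy
  -- apply the isometry bounds to `‖y‖ x ± ‖x‖ y`, whose squared norm is `2 ‖x‖² ‖y‖²`
  have hrip : ∀ c : ℝ, c ^ 2 = 1 →
      (1 - δ) * (2 * X ^ 2 * Y ^ 2) ≤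
        Y ^ 2 * l2norm (A *ᵥ x) ^ 2 + 2 * c * X * Y * d + X ^ 2 * l2norm (A *ᵥ y) ^ 2 ∧
      Y ^ 2 * l2norm (A *ᵥ x) ^ 2 + 2 * c * X * Y * d + X ^ 2 * l2norm (A *ᵥ y) ^ 2 ≤
        (1 + δ) * (2 * X ^ 2 * Y ^ 2) := by
    intro c hc
    have hsparse : IsSparse (s + t) (Y • x + (c * X) • y) :=
      ⟨S ∪ T, (Finset.card_union_le S T).trans (add_le_add hS hT), fun i hi => by
        rw [Finset.mem_union, not_or] at hi
        simp [hx i hi.1, hy i hi.2]⟩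
    have h := hA _ hsparse
    rw [mulVec_add, mulVec_smul, mulVec_smul, l2norm_smul_add_smul_sq,
      l2norm_smul_add_smul_sq, hxy, mul_pow, hc] at h
    constructor <;> linarith [h.1, h.2]
  obtain ⟨hp₁, hp₂⟩ := hrip 1 (one_pow 2)
  obtain ⟨hm₁, hm₂⟩ := hrip (-1) (by norm_num)
  refine abs_le.2 ⟨?_, ?_⟩ <;> refine le_of_mul_le_mul_right ?_ hXY <;> linarith

lemma abs_dotProduct_mulVec_indicator_union_le {A : Matrix (Fin m) (Fin n) ℝ} {s t : ℕ} {δ : ℝ}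
    (hA : RestrictedIsometry A (s + t) δ) (hδ : 0 ≤ δ) {S₁ S₂ T : Finset (Fin n)}
    (h₁₂ : Disjoint S₁ S₂) (h₁ : Disjoint S₁ T) (h₂ : Disjoint S₂ T) (hS₁ : #S₁ ≤ s)
    (hS₂ : #S₂ ≤ s) (hT : #T ≤ t) (x : Fin n → ℝ) {y : Fin n → ℝ} (hy : ∀ i ∉ T, y i = 0) :
    |(A *ᵥ Set.indicator ↑(S₁ ∪ S₂) x) ⬝ᵥ (A *ᵥ y)| ≤
      √2 * δ * (l2norm (Set.indicator ↑(S₁ ∪ S₂) x) * l2norm y) := by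
  have hsupp : ∀ S : Finset (Fin n), ∀ i ∉ S, Set.indicator ↑S x i = 0 :=
    fun S i hi => Set.indicator_of_notMem (by simpa using hi) x
  calc _ = |(A *ᵥ Set.indicator ↑S₁ x) ⬝ᵥ (A *ᵥ y) + (A *ᵥ Set.indicator ↑S₂ x) ⬝ᵥ (A *ᵥ y)| := by
        rw [indicator_finset_union h₁₂, mulVec_add, add_dotProduct]
    _ ≤ δ * (l2norm (Set.indicator ↑S₁ x) * l2norm y) +
        δ * (l2norm (Set.indicator ↑S₂ x) * l2norm y) :=
        (abs_add_le _ _).trans <| add_le_add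
          (abs_dotProduct_mulVec_le_of_disjoint hA h₁ hS₁ hT (hsupp S₁) hy)
          (abs_dotProduct_mulVec_le_of_disjoint hA h₂ hS₂ hT (hsupp S₂) hy)
    _ = δ * l2norm y * (l2norm (Set.indicator ↑S₁ x) + l2norm (Set.indicator ↑S₂ x)) := by ring
    _ ≤ δ * l2norm y * (√2 * l2norm (Set.indicator ↑(S₁ ∪ S₂) x)) :=
        mul_le_mul_of_nonneg_left (l2norm_indicator_add_le_sqrt_two_mul h₁₂ x)
          (mul_nonneg hδ (l2norm_nonneg y))
    _ = _ := by ring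

lemma mul_l2norm_indicator_union_le {A : Matrix (Fin m) (Fin n) ℝ} {k : ℕ} {δ : ℝ}
    (hA : RestrictedIsometry A (k + k) δ) (hδ : 0 ≤ δ) {S₁ S₂ : Finset (Fin n)}
    (h₁₂ : Disjoint S₁ S₂) (hS₁ : #S₁ ≤ k) (hS₂ : #S₂ ≤ k) {N : ℕ} {B : Fin N → Finset (Fin n)}
    (hB : ∀ j, Disjoint (S₁ ∪ S₂) (B j) ∧ #(B j) ≤ k) {x : Fin n → ℝ}
    (hx : x = Set.indicator ↑(S₁ ∪ S₂) x + ∑ j, Set.indicator ↑(B j) x) :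
    (1 - δ) * l2norm (Set.indicator ↑(S₁ ∪ S₂) x) ≤
      √(1 + δ) * l2norm (A *ᵥ x) + √2 * δ * ∑ j, l2norm (Set.indicator ↑(B j) x) := by
  set u := Set.indicator ↑(S₁ ∪ S₂) x
  set X := l2norm u
  set tail := ∑ j, l2norm (Set.indicator ↑(B j) x)
  have hu : IsSparse (k + k) u := ⟨S₁ ∪ S₂, (Finset.card_union_le _ _).trans (add_le_add hS₁ hS₂),
    fun i hi => Set.indicator_of_notMem (by simpa using hi) x⟩
  obtain ⟨hlow, hup⟩ := hA u hu
  have hAu : l2norm (A *ᵥ u) ≤ √(1 + δ) * X := by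
    refine le_of_pow_le_pow_left₀ two_ne_zero
      (mul_nonneg (Real.sqrt_nonneg _) (l2norm_nonneg _)) ?_
    rwa [mul_pow, Real.sq_sqrt (by linarith)]
  have hAx : A *ᵥ x = A *ᵥ u + ∑ j, A *ᵥ Set.indicator ↑(B j) x := by
    rw [← mulVec_sum, ← mulVec_add, ← hx]
  have hdot : (A *ᵥ u) ⬝ᵥ (A *ᵥ x) ≤ √(1 + δ) * X * l2norm (A *ᵥ x) :=
    (le_abs_self _).trans <| (abs_dotProduct_le _ _).trans <|
      mul_le_mul_of_nonneg_right hAu (l2norm_nonneg _)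
  have hcross : -∑ j, (A *ᵥ u) ⬝ᵥ (A *ᵥ Set.indicator ↑(B j) x) ≤ √2 * δ * X * tail := by
    rw [← Finset.sum_neg_distrib, Finset.mul_sum]
    refine Finset.sum_le_sum fun j _ => ?_
    obtain ⟨hdisj, hcard⟩ := hB j
    rw [Finset.disjoint_union_left] at hdisj
    have := abs_dotProduct_mulVec_indicator_union_le hA hδ h₁₂ hdisj.1 hdisj.2 hS₁ hS₂ hcard x
      (y := Set.indicator ↑(B j) x) fun i hi => Set.indicator_of_notMem (by simpa using hi) x
    linarith [neg_abs_le ((A *ᵥ u) ⬝ᵥ (A *ᵥ Set.indicator ↑(B j) x))]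
  have hmain : X * ((1 - δ) * X) ≤ X * (√(1 + δ) * l2norm (A *ᵥ x) + √2 * δ * tail) := by
    have : l2norm (A *ᵥ u) ^ 2 = (A *ᵥ u) ⬝ᵥ (A *ᵥ x) -
        ∑ j, (A *ᵥ u) ⬝ᵥ (A *ᵥ Set.indicator ↑(B j) x) := by
      rw [hAx, dotProduct_add, dotProduct_sum, sq_l2norm_eq_dotProduct]; ring
    nlinarith
  rcases (show 0 ≤ X from l2norm_nonneg u).eq_or_lt with hX | hX
  · rw [← hX, mul_zero]
    exact add_nonneg (mul_nonneg (Real.sqrt_nonneg _) (l2norm_nonneg _))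
      (mul_nonneg (mul_nonneg (Real.sqrt_nonneg _) hδ)
        (Finset.sum_nonneg fun j _ => l2norm_nonneg _))
  · exact le_of_mul_le_mul_left hmain hX

lemma one_sub_one_add_sqrt_two_mul_pos {δ : ℝ} (hδ : δ < √2 - 1) : 0 < 1 - (1 + √2) * δ := by
  have h : (1 + √2) * (√2 - 1) = 1 := by ring_nf; rw [Real.sq_sqrt zero_le_two]; norm_num
  nlinarith [Real.sqrt_nonneg 2]

theorem l2norm_le_of_sum_compl_abs_le {A : Matrix (Fin m) (Fin n) ℝ} {k : ℕ} {δ : ℝ}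
    (hA : RestrictedIsometry A (2 * k) δ) (hδ₀ : 0 ≤ δ) (hδ : δ < √2 - 1) (hk : 0 < k)
    {S : Finset (Fin n)} (hS : #S ≤ k) {h : Fin n → ℝ} {η e : ℝ} (hAh : l2norm (A *ᵥ h) ≤ η)
    (hcone : ∑ i ∈ Sᶜ, |h i| ≤ ∑ i ∈ S, |h i| + 2 * e) :
    l2norm h ≤ 2 * √(1 + δ) / (1 - (1 + √2) * δ) * η +
      (4 * √2 * δ / (1 - (1 + √2) * δ) + 2) * (e / √k) := by
  obtain ⟨T₁, hT₁, hT₁k, N, B, hB, hsplit, htail⟩ := exists_block_decomposition hk h Sᶜ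
  have hST₁ : Disjoint S T₁ := Finset.disjoint_of_subset_right hT₁ disjoint_compl_right
  have hdecomp : h = Set.indicator ↑(S ∪ T₁) h + ∑ j, Set.indicator ↑(B j) h := by
    rw [indicator_finset_union hST₁, add_assoc, ← hsplit, Finset.coe_compl,
      Set.indicator_self_add_compl]
  have hB' : ∀ j, Disjoint (S ∪ T₁) (B j) ∧ #(B j) ≤ k := fun j =>
    ⟨Finset.disjoint_of_subset_right (hB j).1 (by
      simp only [Finset.disjoint_left, Finset.mem_union, Finset.mem_sdiff, Finset.mem_compl]
      tauto), (hB j).2⟩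
  have hhead := mul_l2norm_indicator_union_le (two_mul k ▸ hA) hδ₀ hST₁ hS hT₁k hB' hdecomp
  set X := l2norm (Set.indicator ↑(S ∪ T₁) h)
  set tail := ∑ j, l2norm (Set.indicator ↑(B j) h)
  have hsk : 0 < √k := Real.sqrt_pos.2 (Nat.cast_pos.2 hk)
  have htail' : tail ≤ X + 2 * (e / √k) := by
    have hSX := l2norm_indicator_mono Finset.subset_union_left h (T := S ∪ T₁)
    have := sum_abs_le_sqrt_mul_l2norm_indicator hS h
    calc tail ≤ (∑ i ∈ Sᶜ, |h i|) / √k := htail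
      _ ≤ (√k * X + 2 * e) / √k := by
        gcongr; linarith [mul_le_mul_of_nonneg_left hSX hsk.le]
      _ = X + 2 * (e / √k) := by field_simp
  have hD := one_sub_one_add_sqrt_two_mul_pos hδ
  have hX : X ≤ (√(1 + δ) * η + 2 * √2 * δ * (e / √k)) / (1 - (1 + √2) * δ) := by
    rw [le_div_iff₀ hD]
    linarith [mul_le_mul_of_nonneg_left htail' (by positivity : 0 ≤ √2 * δ),
      mul_le_mul_of_nonneg_left hAh (Real.sqrt_nonneg (1 + δ))]
  calc l2norm h ≤ X + tail := by
        conv_lhs => rw [hdecomp]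
        exact (l2norm_add_le _ _).trans (add_le_add le_rfl (l2norm_sum_le _ _))
    _ ≤ 2 * ((√(1 + δ) * η + 2 * √2 * δ * (e / √k)) / (1 - (1 + √2) * δ)) + 2 * (e / √k) := by
        linarith
    _ = _ := by ring

end RestrictedIsometry

theorem robust_recovery {m n k : ℕ} (hk : 0 < k)
    (A : Matrix (Fin m) (Fin n) ℝ) (δ : ℝ)
    (hδ : IsLeast {d : ℝ | 0 ≤ d ∧ ∀ x : Fin n → ℝ, IsSparse (2 * k) x →
        (1 - d) * l2norm x ^ 2 ≤ l2norm (A.mulVec x) ^ 2 ∧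
          l2norm (A.mulVec x) ^ 2 ≤ (1 + d) * l2norm x ^ 2} δ)
    (hδlt : δ < Real.sqrt 2 - 1) :
    ∃ C₁ C₂ : ℝ, 0 < C₁ ∧ 0 < C₂ ∧
      ∀ (f : Fin n → ℝ) (ε : ℝ), 0 ≤ ε → ∀ e : Fin m → ℝ, l2norm e ≤ ε →
        ∀ b : Fin m → ℝ, b = A.mulVec f + e →
          ∀ fstar : Fin n → ℝ,
            (l2norm (A.mulVec fstar - b) ≤ ε ∧
              ∀ x : Fin n → ℝ, l2norm (A.mulVec x - b) ≤ ε → l1norm fstar ≤ l1norm x) →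
            ∀ fk : Fin n → ℝ, IsBestKTermApprox k f fk →
              l2norm (f - fstar) ≤ C₁ * ε + C₂ * l1norm (f - fk) / Real.sqrt k := by
  obtain ⟨⟨hδ₀, hA⟩, -⟩ := hδ
  have hD := one_sub_one_add_sqrt_two_mul_pos hδlt
  refine ⟨4 * √(1 + δ) / (1 - (1 + √2) * δ), 4 * √2 * δ / (1 - (1 + √2) * δ) + 2,
    div_pos (by positivity) hD, add_pos_of_nonneg_of_pos (div_nonneg (by positivity) hD.le) two_pos,
    ?_⟩
  rintro f ε - e he b rfl fstar ⟨hfeas, hmin⟩ fk ⟨S, hS, -, rfl⟩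
  have htube : l2norm (A *ᵥ (fstar - f)) ≤ 2 * ε :=
    calc l2norm (A *ᵥ (fstar - f)) = l2norm ((A *ᵥ fstar - (A *ᵥ f + e)) + e) := by
          rw [mulVec_sub]; abel_nf
      _ ≤ 2 * ε := by linarith [l2norm_add_le (A *ᵥ fstar - (A *ᵥ f + e)) e]
  have hcone := sum_compl_abs_le_of_l1norm_add_le S (x := f) (h := fstar - f) <| by
    rw [add_sub_cancel]
    exact hmin f (by rwa [sub_add_cancel_left, l2norm_neg])
  have hfk : (f - fun i => if i ∈ S then f i else 0) = Set.indicator ↑Sᶜ f := by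
    ext i; by_cases hi : i ∈ S <;> simp [hi]
  rw [hfk, l1norm_indicator, ← neg_sub, l2norm_neg]
  calc l2norm (fstar - f) ≤ _ := l2norm_le_of_sum_compl_abs_le hA hδ₀ hδlt hk hS.le htube hcone
    _ = _ := by ring
end

section
/- Let c₀ > 0 and let p₀ : ℝ³ → ℂ be a Schwartz function that is even in its third coordinate. Define p(x,t) = ∫_{ℝ³} cos(2π c₀ ‖ξ‖ t) (𝓕p₀)(ξ) e^{2πi⟨x,ξ⟩} dξ (the Fourier-domain solution of the free-space wave equation with initial pressure p₀ and zero initial velocity). Then for all (x₁, x₂) ∈ ℝ² and all t ∈ ℝ, the trace of p on the sensor plane x₃ = 0 admits the representation p(x₁, x₂, 0, t) = ∫_{ℝ²} e^{2πi(x₁ k₁ + x₂ k₂)} [ 2 ∫_{c₀‖k_S‖}^∞ ((ω/c₀²)/√((ω/c₀)² − ‖k_S‖²)) · (𝓕p₀)(k₁, k₂, √((ω/c₀)² − ‖k_S‖²)) · cos(2π ω t) dω ] dk_S, where k_S = (k₁, k₂) and ‖k_S‖ = √(k₁² + k₂²). -/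
open MeasureTheory Real

/-- The point of ℝ³ (as a Euclidean space) with the given coordinates. -/
noncomputable def vec3 (a b c : ℝ) : EuclideanSpace ℝ (Fin 3) :=
  (WithLp.equiv 2 (Fin 3 → ℝ)).symm ![a, b, c]

/-!
On the plane `x₃ = 0` the phase `e^{2πi⟨x, ξ⟩}` only sees `k_S = (ξ₁, ξ₂)`, so by Fubini the trace
is the planar inverse Fourier transform of an integral over `ξ₃ = c`. Evenness of `p₀` in `x₃`
passes to `𝓕 p₀` because the reflection is a linear isometry, so that integral is twice the one
over `c > 0`. The substitution `c = √((ω / c₀)² - ‖k_S‖²)`, i.e. `ω = c₀ ‖ξ‖`, is monotone with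
derivative `(ω / c₀²) / c` and maps `(c₀ ‖k_S‖, ∞)` onto `(0, ∞)`; it turns `cos (2π c₀ ‖ξ‖ t)`
into `cos (2π ω t)`.
-/

open Set
open scoped FourierTransform

lemma vec3_apply (a b c : ℝ) (i : Fin 3) : vec3 a b c i = ![a, b, c] i := rfl

lemma vec3_coords (x : EuclideanSpace ℝ (Fin 3)) : vec3 (x 0) (x 1) (x 2) = x := by
  ext i; fin_cases i <;> rfl

lemma norm_vec3 (a b c : ℝ) : ‖vec3 a b c‖ = √(a ^ 2 + b ^ 2 + c ^ 2) := by
  simp [EuclideanSpace.norm_eq, Fin.sum_univ_three, vec3_apply]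

lemma inner_vec3 (a b c a' b' c' : ℝ) :
    inner ℝ (vec3 a b c) (vec3 a' b' c') = a * a' + b * b' + c * c' := by
  simp only [PiLp.inner_apply, Fin.sum_univ_three, vec3_apply]
  simp [mul_comm]

noncomputable def reflectThird : EuclideanSpace ℝ (Fin 3) ≃ₗᵢ[ℝ] EuclideanSpace ℝ (Fin 3) :=
  LinearIsometryEquiv.piLpCongrRight 2
    ![LinearIsometryEquiv.refl ℝ ℝ, LinearIsometryEquiv.refl ℝ ℝ, LinearIsometryEquiv.neg ℝ]

lemma reflectThird_vec3 (a b c : ℝ) : reflectThird (vec3 a b c) = vec3 a b (-c) := by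
  ext i
  fin_cases i <;> simp [reflectThird, LinearIsometryEquiv.piLpCongrRight_apply, vec3]

lemma fourier_vec3_neg {E : Type*} [NormedAddCommGroup E] [NormedSpace ℂ E]
    {f : EuclideanSpace ℝ (Fin 3) → E} (hf : ∀ a b c, f (vec3 a b (-c)) = f (vec3 a b c))
    (a b c : ℝ) : 𝓕 f (vec3 a b (-c)) = 𝓕 f (vec3 a b c) := by
  have hinv : f ∘ reflectThird = f := funext fun x => by
    rw [Function.comp_apply, ← vec3_coords x, reflectThird_vec3, hf]
  rw [← reflectThird_vec3, ← Real.fourier_comp_linearIsometry, hinv]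

lemma integral_eq_two_smul_integral_Ioi_of_even {E : Type*} [NormedAddCommGroup E]
    [NormedSpace ℝ E] {g : ℝ → E} (hg : ∀ x, g (-x) = g x) :
    ∫ x, g x = (2 : ℝ) • ∫ x in Ioi 0, g x := by
  have hIic : ∫ x in Iic 0, g x = ∫ x in Ioi 0, g x := by
    rw [← neg_zero, ← integral_comp_neg_Ioi, neg_zero]
    simp only [hg]
  by_cases hint : IntegrableOn g (Ioi 0)
  · have hint' : IntegrableOn g (Iic 0) := by
      have h := IntegrableOn.comp_neg_Iio (c := (0 : ℝ)) (f := g) (by rwa [neg_zero])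
      simp only [hg] at h
      exact (integrableOn_Iic_iff_integrableOn_Iio (by simp)).2 h
    rw [← intervalIntegral.integral_Iic_add_Ioi hint' hint, hIic, two_smul]
  · have : ¬ Integrable g := fun h => hint h.integrableOn
    rw [integral_undef hint, integral_undef this, smul_zero]

section ChangeOfVariables

variable {c₀ s ω : ℝ}

lemma sub_pos_of_mul_sqrt_lt (hc₀ : 0 < c₀) (hω : c₀ * √s < ω) : 0 < (ω / c₀) ^ 2 - s :=
  sub_pos.2 <| lt_sq_of_sqrt_lt <| (lt_div_iff₀ hc₀).2 (by linarith)

lemma hasDerivAt_sqrt_sq_div_sub (hc₀ : 0 < c₀) (hω : c₀ * √s < ω) :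
    HasDerivAt (fun ω => √((ω / c₀) ^ 2 - s)) ((ω / c₀ ^ 2) / √((ω / c₀) ^ 2 - s)) ω := by
  have hpos := sub_pos_of_mul_sqrt_lt hc₀ hω
  have hu : HasDerivAt (fun ω => (ω / c₀) ^ 2 - s) (2 * (ω / c₀) * (1 / c₀)) ω := by
    simpa using (((hasDerivAt_id' ω).div_const c₀).pow 2).sub_const s
  convert hu.sqrt hpos.ne' using 1
  field_simp

lemma monotoneOn_sqrt_sq_div_sub (hc₀ : 0 < c₀) :
    MonotoneOn (fun ω => √((ω / c₀) ^ 2 - s)) (Ioi (c₀ * √s)) := by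
  intro a (ha : c₀ * √s < a) b _ hab
  have ha0 : 0 ≤ a := (by positivity : 0 ≤ c₀ * √s).trans ha.le
  dsimp only
  gcongr

lemma image_sqrt_sq_div_sub (hc₀ : 0 < c₀) (hs : 0 ≤ s) :
    (fun ω => √((ω / c₀) ^ 2 - s)) '' Ioi (c₀ * √s) = Ioi 0 := by
  ext y
  constructor
  · rintro ⟨ω, hω, rfl⟩
    exact sqrt_pos.2 (sub_pos_of_mul_sqrt_lt hc₀ hω)
  · intro (hy : 0 < y)
    refine ⟨c₀ * √(y ^ 2 + s), ?_, ?_⟩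
    · exact mul_lt_mul_of_pos_left (sqrt_lt_sqrt hs (lt_add_of_pos_left s (by positivity))) hc₀
    · simp [hc₀.ne', sq_sqrt (by positivity : 0 ≤ y ^ 2 + s), hy.le]

lemma integral_Ioi_zero_eq_integral_sqrt_sq_div_sub {E : Type*} [NormedAddCommGroup E]
    [NormedSpace ℝ E] (hc₀ : 0 < c₀) (hs : 0 ≤ s) (g : ℝ → E) :
    ∫ c in Ioi 0, g c = ∫ ω in Ioi (c₀ * √s),
      ((ω / c₀ ^ 2) / √((ω / c₀) ^ 2 - s)) • g √((ω / c₀) ^ 2 - s) := by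
  rw [← image_sqrt_sq_div_sub hc₀ hs]
  exact integral_image_eq_integral_deriv_smul_of_monotoneOn measurableSet_Ioi
    (fun ω hω => (hasDerivAt_sqrt_sq_div_sub hc₀ hω).hasDerivWithinAt)
    (monotoneOn_sqrt_sq_div_sub hc₀) g

end ChangeOfVariables

noncomputable def splitThird : EuclideanSpace ℝ (Fin 3) ≃ᵐ (ℝ × ℝ) × ℝ :=
  (MeasurableEquiv.toLp 2 (Fin 3 → ℝ)).symm.trans <|
    (MeasurableEquiv.piFinSuccAbove (fun _ => ℝ) 2).trans <|
      MeasurableEquiv.prodComm.trans <| MeasurableEquiv.finTwoArrow.prodCongr (.refl ℝ)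

lemma splitThird_symm_apply (k : ℝ × ℝ) (c : ℝ) : splitThird.symm (k, c) = vec3 k.1 k.2 c := by
  rw [MeasurableEquiv.symm_apply_eq]
  rfl

lemma measurePreserving_splitThird : MeasurePreserving splitThird :=
  (EuclideanSpace.volume_preserving_symm_measurableEquiv_toLp (Fin 3)).trans <|
    (volume_preserving_piFinSuccAbove (fun _ => ℝ) 2).trans <|
      Measure.measurePreserving_swap.trans <| (volume_preserving_finTwoArrow ℝ).prod (.id _)

lemma integral_eq_integral_integral_vec3 {E : Type*} [NormedAddCommGroup E] [NormedSpace ℝ E]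
    {f : EuclideanSpace ℝ (Fin 3) → E} (hf : Integrable f) :
    ∫ ξ, f ξ = ∫ k : ℝ × ℝ, ∫ c, f (vec3 k.1 k.2 c) := by
  have hsymm := measurePreserving_splitThird.symm
  have hemb := splitThird.symm.measurableEmbedding
  rw [← hsymm.integral_comp hemb, Measure.volume_eq_prod,
    integral_prod (fun q => f (splitThird.symm q)) ((hsymm.integrable_comp_emb hemb).2 hf)]
  simp only [splitThird_symm_apply]

lemma norm_ofReal_cos_mul_mul_cexp_le (θ r : ℝ) (z : ℂ) :
    ‖(cos θ : ℂ) * z * Complex.exp (2 * π * Complex.I * r)‖ ≤ ‖z‖ := by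
  simp only [norm_mul, Complex.norm_exp, Complex.norm_real, norm_eq_abs]
  simpa using mul_le_of_le_one_left (norm_nonneg z) (abs_cos_le_one θ)

lemma integrable_ofReal_cos_mul_mul_cexp {α : Type*} [MeasurableSpace α] {μ : Measure α}
    {F : α → ℂ} (hF : Integrable F μ) {θ r : α → ℝ} (hθ : Measurable θ) (hr : Measurable r) :
    Integrable (fun x => (cos (θ x) : ℂ) * F x * Complex.exp (2 * π * Complex.I * r x)) μ :=
  hF.mono (by fun_prop) (ae_of_all _ fun x => norm_ofReal_cos_mul_mul_cexp_le _ _ _)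

lemma norm_vec3_sqrt_sq_div_sub {c₀ k₁ k₂ ω : ℝ} (hc₀ : 0 < c₀)
    (hω : c₀ * √(k₁ ^ 2 + k₂ ^ 2) < ω) :
    ‖vec3 k₁ k₂ √((ω / c₀) ^ 2 - (k₁ ^ 2 + k₂ ^ 2))‖ = ω / c₀ := by
  have hω₀ : 0 ≤ ω := (mul_nonneg hc₀.le (sqrt_nonneg _)).trans hω.le
  rw [norm_vec3, sq_sqrt (sub_pos_of_mul_sqrt_lt hc₀ hω).le, add_sub_cancel,
    sqrt_sq (by positivity)]

lemma integral_cos_mul_vec3_eq_two_mul_integral_Ioi {c₀ : ℝ} (hc₀ : 0 < c₀)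
    {F : EuclideanSpace ℝ (Fin 3) → ℂ} (hF : ∀ a b c, F (vec3 a b (-c)) = F (vec3 a b c)) (k₁ k₂ t : ℝ) :
    ∫ c, (cos (2 * π * c₀ * ‖vec3 k₁ k₂ c‖ * t) : ℂ) * F (vec3 k₁ k₂ c) =
      2 * ∫ ω in Ioi (c₀ * √(k₁ ^ 2 + k₂ ^ 2)),
        (((ω / c₀ ^ 2) / √((ω / c₀) ^ 2 - (k₁ ^ 2 + k₂ ^ 2)) : ℝ) : ℂ) *
          F (vec3 k₁ k₂ √((ω / c₀) ^ 2 - (k₁ ^ 2 + k₂ ^ 2))) * (cos (2 * π * ω * t) : ℂ) := by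
  have hnorm (c : ℝ) : ‖vec3 k₁ k₂ (-c)‖ = ‖vec3 k₁ k₂ c‖ := by
    rw [← reflectThird_vec3, LinearIsometryEquiv.norm_map]
  rw [integral_eq_two_smul_integral_Ioi_of_even (fun c => by rw [hnorm, hF]),
    integral_Ioi_zero_eq_integral_sqrt_sq_div_sub (s := k₁ ^ 2 + k₂ ^ 2) hc₀ (by positivity),
    Complex.real_smul, Complex.ofReal_ofNat]
  congr 1
  refine setIntegral_congr_fun measurableSet_Ioi fun ω (hω : _ < ω) => ?_
  rw [norm_vec3_sqrt_sq_div_sub hc₀ hω, Complex.real_smul, mul_assoc (2 * π) c₀,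
    mul_div_cancel₀ _ hc₀.ne']
  ring

theorem sensor_plane_trace_representation
    (c₀ : ℝ) (hc₀ : 0 < c₀)
    (p₀ : SchwartzMap (EuclideanSpace ℝ (Fin 3)) ℂ)
    (heven : ∀ a b c : ℝ, p₀ (vec3 a b (-c)) = p₀ (vec3 a b c))
    (p : EuclideanSpace ℝ (Fin 3) → ℝ → ℂ)
    (hp : ∀ (x : EuclideanSpace ℝ (Fin 3)) (t : ℝ),
      p x t = ∫ ξ : EuclideanSpace ℝ (Fin 3),
        (Real.cos (2 * π * c₀ * ‖ξ‖ * t) : ℂ) * FourierTransform.fourier (⇑p₀) ξ *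
          Complex.exp (2 * π * Complex.I * ((inner ℝ x ξ : ℝ) : ℂ))) :
    ∀ (x₁ x₂ t : ℝ),
      p (vec3 x₁ x₂ 0) t =
        ∫ kS : ℝ × ℝ,
          Complex.exp (2 * π * Complex.I * ((x₁ * kS.1 + x₂ * kS.2 : ℝ) : ℂ)) *
            (2 * ∫ ω in Set.Ioi (c₀ * Real.sqrt (kS.1 ^ 2 + kS.2 ^ 2)),
              (((ω / c₀ ^ 2) / Real.sqrt ((ω / c₀) ^ 2 - (kS.1 ^ 2 + kS.2 ^ 2)) : ℝ) : ℂ) *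
                FourierTransform.fourier (⇑p₀)
                  (vec3 kS.1 kS.2 (Real.sqrt ((ω / c₀) ^ 2 - (kS.1 ^ 2 + kS.2 ^ 2)))) *
                (Real.cos (2 * π * ω * t) : ℂ)) := by
  intro x₁ x₂ t
  have hint := integrable_ofReal_cos_mul_mul_cexp (𝓕 p₀).integrable (μ := volume)
    (θ := fun ξ => 2 * π * c₀ * ‖ξ‖ * t) (r := fun ξ => inner ℝ (vec3 x₁ x₂ 0) ξ)
    (by fun_prop) (by fun_prop)
  rw [SchwartzMap.fourier_coe] at hint
  rw [hp, integral_eq_integral_integral_vec3 hint]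
  congr 1 with k
  rw [← integral_cos_mul_vec3_eq_two_mul_integral_Ioi hc₀ (fourier_vec3_neg heven),
    ← integral_const_mul]
  simp only [inner_vec3, zero_mul, add_zero]
  congr 1 with c
  ring
end
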